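/- Let M be a 3-connected matroid and z ∈ E(M). Then M has a vertical 3-separation (X, {z}, Y) if and only if si(M/z), the simplification of M/z, is not 3-connected. -/

import Mathlib

open Set Matroid

variable {α β : Type*}

namespace NDP

/-- The rank of a set `X` in a matroid `M`: the largest cardinality of an
independent subset of `X` (intended for finite matroids). -/
noncomputable def rk (M : Matroid α) (X : Set α) : ℕ :=
  sSup {n : ℕ | ∃ I, M.Indep I ∧ I ⊆ X ∧ I.ncard = n}

/-- The connectivity function `λ_M(X) = r(X) + r(E − X) − r(M)`, valued in `ℤ`. -/
noncomputable def lam (M : Matroid α) (X : Set α) : ℤ :=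
  (rk M X : ℤ) + (rk M (M.E \ X) : ℤ) - (rk M M.E : ℤ)

/-- Deletion of a set of elements. -/
def delete (M : Matroid α) (D : Set α) : Matroid α := M ↾ (M.E \ D)

/-- Contraction of a set of elements, defined by duality. -/
def contract (M : Matroid α) (C : Set α) : Matroid α := (delete M✶ C)✶

/-- `X` is a `k`-separating set of `M`. -/
def Separating (M : Matroid α) (k : ℕ) (X : Set α) : Prop :=
  X ⊆ M.E ∧ lam M X ≤ (k : ℤ) - 1

/-- `X` is exactly `k`-separating in `M`. -/
def ExactlySeparating (M : Matroid α) (k : ℕ) (X : Set α) : Prop :=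
  X ⊆ M.E ∧ lam M X = (k : ℤ) - 1

/-- `(X, M.E \ X)` is a `k`-separation of `M`. -/
def IsKSeparation (M : Matroid α) (k : ℕ) (X : Set α) : Prop :=
  Separating M k X ∧ k ≤ X.ncard ∧ k ≤ (M.E \ X).ncard

/-- A matroid is connected if it has no 1-separations. -/
def Connected (M : Matroid α) : Prop := ∀ X, ¬ IsKSeparation M 1 X

/-- A matroid is 3-connected if it has no k-separations for k < 3. -/
def ThreeConnected (M : Matroid α) : Prop := ∀ k < 3, ∀ X, ¬ IsKSeparation M k X

/-- A circuit: a minimal dependent set. -/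
def Circuit (M : Matroid α) (C : Set α) : Prop :=
  C ⊆ M.E ∧ ¬ M.Indep C ∧ ∀ D, D ⊂ C → M.Indep D

def Cocircuit (M : Matroid α) (C : Set α) : Prop := Circuit M✶ C

def Triangle (M : Matroid α) (T : Set α) : Prop := Circuit M T ∧ T.ncard = 3

def Triad (M : Matroid α) (T : Set α) : Prop := Cocircuit M T ∧ T.ncard = 3

/-- `N` is a minor of `M`. -/
def Minor (N M : Matroid α) : Prop := ∃ C D, N = delete (contract M C) D

/-- `M` has a minor isomorphic to `N`. -/
def IsoMinor (M : Matroid α) (N : Matroid β) : Prop :=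
  ∃ (f : β → α) (hf : Set.InjOn f N.E), Minor (N.map f hf) M

/-- `X` is a set of representatives for the simplification of `M`:
one non-loop element from each parallel class. -/
def SimpRep (M : Matroid α) (X : Set α) : Prop :=
  X ⊆ M.E ∧ (∀ e ∈ X, M.Indep {e}) ∧
  (∀ e ∈ M.E, M.Indep {e} → ∃ f ∈ X, f ∈ M.closure {e}) ∧
  (∀ f ∈ X, ∀ g ∈ X, f ∈ M.closure {g} → f = g)

/-- `si M` (the simplification of `M`) is a 3-connected matroid. -/
def SiThreeConnected (M : Matroid α) : Prop :=
  ∀ X, SimpRep M X → ThreeConnected (M ↾ X)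

/-- `co M` (the cosimplification of `M`) is a 3-connected matroid. -/
def CoThreeConnected (M : Matroid α) : Prop := SiThreeConnected M✶

/-- The restriction of `M` to `P` is isomorphic to the rank-`r` uniform matroid on `P`. -/
def UnifRestr (M : Matroid α) (r : ℕ) (P : Set α) : Prop :=
  P ⊆ M.E ∧ ∀ X ⊆ P, (M.Indep X ↔ X.ncard ≤ r)

/-- A set is fully closed if it is closed in `M` and in `M✶`. -/
def FullClosed (M : Matroid α) (F : Set α) : Prop :=
  M.closure F = F ∧ M✶.closure F = F

/-- The full closure of `X`: the intersection of all fully closed sets containing `X`. -/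
def fcl (M : Matroid α) (X : Set α) : Set α :=
  ⋂₀ {F | X ⊆ F ∧ FullClosed M F}

/-- `(X, {z}, Y)` is a vertical 3-separation of `M`. -/
def VertThreeSep (M : Matroid α) (X : Set α) (z : α) (Y : Set α) : Prop :=
  X ∪ {z} ∪ Y = M.E ∧ Disjoint X Y ∧ z ∉ X ∧ z ∉ Y ∧
  IsKSeparation M 3 (X ∪ {z}) ∧ 3 ≤ rk M (X ∪ {z}) ∧ 3 ≤ rk M Y ∧
  IsKSeparation M 3 X ∧ 3 ≤ rk M X ∧ 3 ≤ rk M (Y ∪ {z}) ∧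
  z ∈ M.closure X ∧ z ∈ M.closure Y

/-- `M` is a wheel or a whirl: its ground set has a cyclic ordering of alternating
spokes and rims in which consecutive triples are alternately triangles and triads. -/
def IsWheelOrWhirl (M : Matroid α) : Prop :=
  ∃ (n : ℕ) (s r : ZMod n → α), 2 ≤ n ∧
    Function.Injective (fun p : ZMod n × Bool => if p.2 then s p.1 else r p.1) ∧
    Set.range s ∪ Set.range r = M.E ∧
    ∀ i : ZMod n, Triangle M {s i, r i, s (i + 1)} ∧ Triad M {r i, s (i + 1), r (i + 1)}

/-- `f` (restricted to `{0, …, k−1}`) is a fan ordering of length `k` in `M`. -/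
def IsFanOrd (M : Matroid α) (k : ℕ) (f : ℕ → α) : Prop :=
  3 ≤ k ∧ Set.InjOn f (Set.Iio k) ∧ (∀ i < k, f i ∈ M.E) ∧
  (Triangle M {f 0, f 1, f 2} ∨ Triad M {f 0, f 1, f 2}) ∧
  ∀ i, i + 3 < k →
    (Triangle M {f i, f (i+1), f (i+2)} → Triad M {f (i+1), f (i+2), f (i+3)}) ∧
    (Triad M {f i, f (i+1), f (i+2)} → Triangle M {f (i+1), f (i+2), f (i+3)})

/-- `F` is a fan of `M`. -/
def IsFan (M : Matroid α) (F : Set α) : Prop :=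
  ∃ k f, IsFanOrd M k f ∧ F = f '' Set.Iio k

/-- `F` is a maximal fan of `M`. -/
def IsMaximalFan (M : Matroid α) (F : Set α) : Prop :=
  IsFan M F ∧ ∀ F', IsFan M F' → F ⊆ F' → F' = F

end NDP

/-!
Write `N = M ／ {z}` and call `X ⊆ E(N)` a vertical `k`-separation of `N` when `λ_N(X) ≤ k - 1`
and both `X` and `E(N) - X` have rank at least `k`. As `z` is a nonloop of the 3-connected `M`,
`r_N(W) = r_M(W ∪ z) - 1`, so `λ_M(X) = λ_N(X)` when `z ∉ cl_M(X)` and `λ_M(X) = λ_N(X) + 1` when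
`z ∈ cl_M(X)`. Hence a vertical 3-separation `(X, {z}, Y)` of `M` gives a vertical 2-separation
`X` of `N`; conversely, for a vertical `k`-separation `X` of `N` with `k ≤ 2`, 3-connectivity of
`M` forces `z` into the closures of both sides and then `k = 2`, which makes `(X, {z}, E(N) - X)`
vertical in `M`.

Vertical separations of `N` only see parallel classes and loops, so they match the separations
of `si(N)`: a representative set `S` split along `cl_N(X)` separates `N ↾ S`, and a
`k`-separation `U` of `N ↾ S` spreads over the parallel classes of its elements to a vertical
`k`-separation of `N` (in a simple matroid, `k ≤ |U|` gives `k ≤ r(U)` for `k ≤ 2`).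
-/

namespace NDP

variable {M N : Matroid α} {I X Y U S R : Set α} {e z : α} {k : ℕ}

lemma contract_eq (M : Matroid α) (C : Set α) : contract M C = M ／ C := rfl

lemma insert_contract_ground_sdiff (hz : z ∈ M.E) (hX : X ⊆ (M ／ {z}).E) :
    insert z ((M ／ {z}).E \ X) = M.E \ X := by
  have hzX : z ∉ X := fun h => (hX h).2 rfl
  ext x
  by_cases hxz : x = z <;> simp [hxz, hz, hzX]

lemma rk_restrict (hXR : X ⊆ R) : rk (M ↾ R) X = rk M X := by
  unfold rk
  congr 1
  ext n
  refine ⟨fun ⟨I, hI, hIX, hn⟩ => ⟨I, hI.of_restrict, hIX, hn⟩,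
    fun ⟨I, hI, hIX, hn⟩ => ⟨I, Matroid.restrict_indep_iff.2 ⟨hI, hIX.trans hXR⟩, hIX, hn⟩⟩

lemma lam_restrict (hU : U ⊆ S) : lam (N ↾ S) U = rk N U + rk N (S \ U) - rk N S := by
  simp only [lam, restrict_ground_eq]
  rw [rk_restrict hU, rk_restrict sdiff_subset, rk_restrict subset_rfl]

lemma lam_compl (hX : X ⊆ M.E) : lam M (M.E \ X) = lam M X := by
  unfold lam
  rw [sdiff_sdiff_cancel_left hX]
  ring

section Rank

variable [M.RankFinite]

lemma cast_rk (X : Set α) : (rk M X : ℕ∞) = M.eRk X := by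
  obtain ⟨I, hI⟩ := M.exists_isBasis' X
  have hle : ∀ n ∈ {n : ℕ | ∃ J, M.Indep J ∧ J ⊆ X ∧ J.ncard = n}, n ≤ I.ncard := by
    rintro n ⟨J, hJ, hJX, rfl⟩
    have h := hJ.encard_le_eRk_of_subset hJX
    rwa [← hI.encard_eq_eRk, ← hJ.finite.cast_ncard_eq, ← hI.indep.finite.cast_ncard_eq,
      Nat.cast_le] at h
  have hrk : rk M X = I.ncard :=
    le_antisymm (csSup_le ⟨_, I, hI.indep, hI.subset, rfl⟩ hle)
      (le_csSup ⟨_, hle⟩ ⟨I, hI.indep, hI.subset, rfl⟩)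
  rw [hrk, hI.indep.finite.cast_ncard_eq, hI.encard_eq_eRk]

lemma rk_mono (h : X ⊆ Y) : rk M X ≤ rk M Y := by
  rw [← Nat.cast_le (α := ℕ∞), cast_rk, cast_rk]
  exact M.eRk_mono h

lemma rk_le_of_subset_closure (h : X ⊆ M.closure Y) : rk M X ≤ rk M Y := by
  rw [← Nat.cast_le (α := ℕ∞), cast_rk, cast_rk, ← M.eRk_closure_eq Y]
  exact M.eRk_mono h

lemma rk_union_le (X Y : Set α) : rk M (X ∪ Y) ≤ rk M X + rk M Y := by
  rw [← Nat.cast_le (α := ℕ∞), Nat.cast_add, cast_rk, cast_rk, cast_rk]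
  exact M.eRk_union_le_eRk_add_eRk X Y

lemma rk_le_ncard (hX : X.Finite) : rk M X ≤ X.ncard := by
  rw [← Nat.cast_le (α := ℕ∞), cast_rk, hX.cast_ncard_eq]
  exact M.eRk_le_encard X

lemma Indep.ncard_le_rk (hI : M.Indep I) (hIX : I ⊆ X) : I.ncard ≤ rk M X := by
  rw [← Nat.cast_le (α := ℕ∞), cast_rk, hI.finite.cast_ncard_eq]
  exact hI.encard_le_eRk_of_subset hIX

lemma nonempty_of_rk_pos (h : 0 < rk M X) : X.Nonempty := by
  rw [nonempty_iff_ne_empty]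
  rintro rfl
  rw [← Nat.cast_pos (α := ℕ∞), cast_rk, eRk_empty] at h
  exact lt_irrefl _ h

lemma rk_insert_of_mem_closure (he : e ∈ M.closure X) : rk M (insert e X) = rk M X := by
  rw [← Nat.cast_inj (R := ℕ∞), cast_rk, cast_rk, ← eRk_insert_closure_eq, insert_eq_of_mem he,
    eRk_closure_eq]

lemma rk_insert_of_notMem_closure (he : e ∈ M.E \ M.closure X) :
    rk M (insert e X) = rk M X + 1 := by
  rw [← Nat.cast_inj (R := ℕ∞), Nat.cast_add, cast_rk, cast_rk, Nat.cast_one]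
  exact M.eRk_insert_eq_add_one he

lemma lam_nonneg (hX : X ⊆ M.E) : 0 ≤ lam M X := by
  have h := rk_union_le (M := M) X (M.E \ X)
  rw [union_sdiff_cancel hX] at h
  unfold lam
  omega

lemma rk_contract_add_one (he : M.IsNonloop e) (hX : X ⊆ (M ／ {e}).E) :
    rk (M ／ {e}) X + 1 = rk M (insert e X) := by
  obtain ⟨J, hJ⟩ := (M ／ {e}).exists_isBasis X hX
  have hJe : Disjoint J {e} :=
    disjoint_singleton_right.2 fun h => (hJ.indep.subset_ground h).2 rfl
  rw [← Nat.cast_inj (R := ℕ∞), Nat.cast_add, cast_rk, cast_rk, Nat.cast_one,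
    ← hJ.encard_eq_eRk, ← union_singleton,
    ← (he.indep.union_isBasis_union_of_contract_isBasis hJ).encard_eq_eRk,
    encard_union_eq hJe, encard_singleton]

lemma lam_contract_add_one (hz : M.IsNonloop z) (hX : X ⊆ (M ／ {z}).E) :
    lam (M ／ {z}) X + 1 = rk M (insert z X) + rk M (M.E \ X) - rk M M.E := by
  have hE : insert z (M ／ {z}).E = M.E := by
    rw [contract_ground, insert_sdiff_singleton, insert_eq_of_mem hz.mem_ground]
  have h₁ := rk_contract_add_one hz hX
  have h₂ := rk_contract_add_one hz (sdiff_subset : (M ／ {z}).E \ X ⊆ _)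
  have h₃ := rk_contract_add_one hz (subset_refl (M ／ {z}).E)
  rw [insert_contract_ground_sdiff hz.mem_ground hX] at h₂
  rw [hE] at h₃
  unfold lam
  omega

end Rank

section Connectivity

lemma ThreeConnected.le_lam (hM : ThreeConnected M) (hk : k < 3) (hX : X ⊆ M.E)
    (h₁ : k ≤ X.ncard) (h₂ : k ≤ (M.E \ X).ncard) : (k : ℤ) ≤ lam M X := by
  by_contra! h
  exact hM k hk X ⟨⟨hX, by omega⟩, h₁, h₂⟩

variable [M.Finite]

lemma ThreeConnected.le_lam_of_le_rk (hM : ThreeConnected M) (hk : k < 3) (hX : X ⊆ M.E)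
    (h₁ : k ≤ rk M X) (h₂ : k ≤ rk M (M.E \ X)) : (k : ℤ) ≤ lam M X :=
  hM.le_lam hk hX (h₁.trans (rk_le_ncard (M.ground_finite.subset hX)))
    (h₂.trans (rk_le_ncard M.ground_finite.sdiff))

lemma ThreeConnected.isNonloop (hM : ThreeConnected M) (he : e ∈ M.E)
    (hE : (M.E \ {e}).Nonempty) : M.IsNonloop e := by
  refine (M.isLoop_or_isNonloop e he).resolve_left fun hl => ?_
  have h₁ : rk M {e} = 0 := by
    rw [← Nat.cast_inj (R := ℕ∞), cast_rk, hl.eRk_eq, Nat.cast_zero]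
  have h₂ : rk M (M.E \ {e}) = rk M M.E := by
    rw [← Nat.cast_inj (R := ℕ∞), cast_rk, cast_rk,
      eRk_eq_eRk_sdiff_eRk_le_zero _ hl.eRk_eq.le]
  have h := hM.le_lam (k := 1) (by norm_num) (singleton_subset_iff.2 he) (by simp)
    ((ncard_pos M.ground_finite.sdiff).2 hE)
  unfold lam at h
  omega

end Connectivity

def IsVertSep (M : Matroid α) (k : ℕ) (X : Set α) : Prop :=
  X ⊆ M.E ∧ lam M X ≤ (k : ℤ) - 1 ∧ k ≤ rk M X ∧ k ≤ rk M (M.E \ X)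

lemma IsVertSep.compl (h : IsVertSep M k X) : IsVertSep M k (M.E \ X) := by
  obtain ⟨hX, hlam, h₁, h₂⟩ := h
  exact ⟨sdiff_subset, by rwa [lam_compl hX], h₂, by rwa [sdiff_sdiff_cancel_left hX]⟩

section Contract

variable [M.Finite]

lemma vertThreeSep_of_mem_closure (hz : z ∈ M.E) (hX : X ⊆ M.E \ {z})
    (hzX : z ∈ M.closure X) (hzY : z ∈ M.closure ((M.E \ {z}) \ X)) (hlam : lam M X ≤ 2)
    (hrX : 3 ≤ rk M X) (hrY : 3 ≤ rk M ((M.E \ {z}) \ X)) :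
    VertThreeSep M X z ((M.E \ {z}) \ X) := by
  set Y := (M.E \ {z}) \ X
  have hXE : X ⊆ M.E := hX.trans sdiff_subset
  have hXzE : X ∪ {z} ⊆ M.E := union_subset hXE (singleton_subset_iff.2 hz)
  have hzX' : z ∉ X := fun h => (hX h).2 rfl
  have hcompXz : M.E \ (X ∪ {z}) = Y := by rw [union_comm, ← sdiff_sdiff]
  have hcompX : M.E \ X = Y ∪ {z} := by
    ext x
    by_cases hxz : x = z <;> simp [Y, hxz, hz, hzX']
  have hrXz : rk M (X ∪ {z}) = rk M X := by rw [union_singleton, rk_insert_of_mem_closure hzX]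
  have hrYz : rk M (Y ∪ {z}) = rk M Y := by rw [union_singleton, rk_insert_of_mem_closure hzY]
  have hcX : 3 ≤ X.ncard := hrX.trans (rk_le_ncard (M.ground_finite.subset hXE))
  have hcY : 3 ≤ Y.ncard := hrY.trans (rk_le_ncard M.ground_finite.sdiff.sdiff)
  have hcYz : Y.ncard ≤ (M.E \ X).ncard := by
    rw [hcompX]
    exact ncard_le_ncard subset_union_left (M.ground_finite.subset (hcompX ▸ sdiff_subset))
  have hlamXz : lam M (X ∪ {z}) = lam M X := by
    unfold lam
    rw [hcompXz, hcompX, hrXz, hrYz]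
  refine ⟨by rw [← hcompXz, union_sdiff_cancel hXzE], disjoint_sdiff_right, hzX',
    fun h => h.1.2 rfl,
    ⟨⟨hXzE, by rw [hlamXz]; omega⟩,
      hcX.trans (ncard_le_ncard subset_union_left (M.ground_finite.subset hXzE)),
      by rwa [hcompXz]⟩,
    by rwa [hrXz], hrY, ⟨⟨hXE, by omega⟩, hcX, hcY.trans hcYz⟩, hrX, by rwa [hrYz], hzX, hzY⟩

lemma mem_closure_of_isVertSep_contract (hM : ThreeConnected M) (hz : M.IsNonloop z)
    (hk : k < 3) (hX : IsVertSep (M ／ {z}) k X) : z ∈ M.closure X := by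
  obtain ⟨hXN, hlam, hrX, hrY⟩ := hX
  by_contra hzX
  -- otherwise `λ_M(X) = λ_N(X) ≤ k - 1` and `X` is a `k`-separation of `M`
  have hins := rk_insert_of_notMem_closure ⟨hz.mem_ground, hzX⟩
  have hcon := lam_contract_add_one hz hXN
  have h₁ := rk_contract_add_one hz hXN
  have h₂ := rk_contract_add_one hz (sdiff_subset : (M ／ {z}).E \ X ⊆ _)
  rw [insert_contract_ground_sdiff hz.mem_ground hXN] at h₂
  have h := hM.le_lam_of_le_rk hk (hXN.trans sdiff_subset) (by omega) (by omega)
  unfold lam at h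
  omega

lemma IsVertSep.vertThreeSep_of_contract (hM : ThreeConnected M) (hz : z ∈ M.E) (hk : k < 3)
    (hX : IsVertSep (M ／ {z}) k X) : VertThreeSep M X z ((M ／ {z}).E \ X) := by
  have hk₁ : 1 ≤ k := by
    have := lam_nonneg hX.1
    have := hX.2.1
    omega
  have hXne : X.Nonempty := nonempty_of_rk_pos (M := M ／ {z}) (by have := hX.2.2.1; omega)
  have hz' : M.IsNonloop z := hM.isNonloop hz (hXne.mono hX.1)
  have hzX := mem_closure_of_isVertSep_contract hM hz' hk hX
  have hzY := mem_closure_of_isVertSep_contract hM hz' hk hX.compl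
  obtain ⟨hXN, hlam, hrX, hrY⟩ := hX
  have h₁ := rk_contract_add_one hz' hXN
  have h₂ := rk_contract_add_one hz' (sdiff_subset : (M ／ {z}).E \ X ⊆ _)
  have hcompX := insert_contract_ground_sdiff hz hXN
  have hlamM : lam M X = lam (M ／ {z}) X + 1 := by
    rw [lam_contract_add_one hz' hXN, rk_insert_of_mem_closure hzX]
    rfl
  rw [rk_insert_of_mem_closure hzX] at h₁
  -- `2 ≤ λ_M(X) = λ_N(X) + 1 ≤ k`, so `k = 2`
  have h2 := hM.le_lam_of_le_rk (k := 2) (by norm_num) (hXN.trans sdiff_subset) (by omega)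
    (by rw [← hcompX, ← h₂]; omega)
  rw [rk_insert_of_mem_closure hzY] at h₂
  have hrY' : rk M ((M.E \ {z}) \ X) = rk (M ／ {z}) ((M ／ {z}).E \ X) + 1 := h₂.symm
  exact vertThreeSep_of_mem_closure hz hXN hzX hzY (by omega) (by omega) (by omega)

lemma VertThreeSep.isVertSep_contract (hM : ThreeConnected M) (h : VertThreeSep M X z Y) :
    IsVertSep (M ／ {z}) 2 X := by
  obtain ⟨hE, hXY, hzX, hzY, -, -, hrY, ⟨⟨hXE, hlam⟩, -, -⟩, hrX, -, hzclX, hzclY⟩ := h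
  have hXN : X ⊆ (M ／ {z}).E := fun x hx => ⟨hXE hx, fun h => hzX (h ▸ hx)⟩
  have hY : (M ／ {z}).E \ X = Y := by
    rw [contract_ground, ← hE]
    ext x
    by_cases hxz : x = z
    · simp [hxz, hzY]
    · have := hXY.notMem_of_mem_right (a := x)
      simp only [mem_sdiff, mem_union, mem_singleton_iff, hxz]
      tauto
  obtain ⟨y, hy⟩ := nonempty_of_rk_pos (by omega : 0 < rk M Y)
  have hz : M.IsNonloop z := hM.isNonloop (hE ▸ by simp)
    ⟨y, hE ▸ Or.inr hy, fun h => hzY (h ▸ hy)⟩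
  have h₁ := rk_contract_add_one hz hXN
  have h₂ := rk_contract_add_one hz (sdiff_subset : (M ／ {z}).E \ X ⊆ _)
  rw [rk_insert_of_mem_closure hzclX] at h₁
  rw [hY, rk_insert_of_mem_closure hzclY] at h₂
  have hlamM : lam M X = lam (M ／ {z}) X + 1 := by
    rw [lam_contract_add_one hz hXN, rk_insert_of_mem_closure hzclX]
    rfl
  exact ⟨hXN, by omega, by omega, by rw [hY]; omega⟩

end Contract

section Simplification

lemma SimpRep.isNonloop (hS : SimpRep N S) (he : e ∈ S) : N.IsNonloop e :=
  indep_singleton.1 (hS.2.1 e he)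

lemma SimpRep.exists_parallel (hS : SimpRep N S) (he : N.IsNonloop e) :
    ∃ s ∈ S, s ∈ N.closure {e} ∧ e ∈ N.closure {s} := by
  obtain ⟨s, hs, hse⟩ := hS.2.2.1 e he.mem_ground he.indep
  exact ⟨s, hs, hse, (hS.isNonloop hs).mem_closure_singleton hse⟩

lemma exists_simpRep (N : Matroid α) : ∃ S, SimpRep N S := by
  rcases isEmpty_or_nonempty α with hα | hα
  · exact ⟨∅, empty_subset _, fun e => isEmptyElim e, fun e => isEmptyElim e,
      fun e => isEmptyElim e⟩
  -- a representative of each nonloop, depending only on its closure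
  let rep : α → α := fun e =>
    Function.invFunOn (fun f => N.closure {f}) {f | N.IsNonloop f} (N.closure {e})
  have hrep : ∀ e, N.IsNonloop e → N.IsNonloop (rep e) ∧ N.closure {rep e} = N.closure {e} :=
    fun e he => Function.invFunOn_pos ⟨e, he, rfl⟩
  refine ⟨rep '' {e | N.IsNonloop e}, ?_, ?_, ?_, ?_⟩
  · rintro _ ⟨e, he, rfl⟩
    exact (hrep e he).1.mem_ground
  · rintro _ ⟨e, he, rfl⟩
    exact (hrep e he).1.indep
  · intro e _ he
    have he' := indep_singleton.1 he
    refine ⟨rep e, mem_image_of_mem _ he', ?_⟩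
    rw [← (hrep e he').2]
    exact N.mem_closure_self _ (hrep e he').1.mem_ground
  · rintro _ ⟨e, he, rfl⟩ _ ⟨f, hf, rfl⟩ h
    have hcl := (hrep e he).1.closure_eq_of_mem_closure h
    rw [(hrep e he).2, (hrep f hf).2] at hcl
    simp only [rep, hcl]

variable [N.Finite]

lemma SimpRep.rk_eq (hS : SimpRep N S) : rk N S = rk N N.E := by
  refine le_antisymm (rk_mono hS.1) (rk_le_of_subset_closure fun e he => ?_)
  obtain hl | hn := N.isLoop_or_isNonloop e he
  · exact hl.mem_closure S
  · obtain ⟨s, hs, -, hes⟩ := hS.exists_parallel hn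
    exact N.closure_subset_closure (singleton_subset_iff.2 hs) hes

lemma SimpRep.le_rk_of_le_ncard (hS : SimpRep N S) (hU : U ⊆ S) (hk : k ≤ 2)
    (h : k ≤ U.ncard) : k ≤ rk N U := by
  interval_cases k
  · exact Nat.zero_le _
  · obtain ⟨u, hu⟩ := nonempty_of_ncard_ne_zero (by omega : U.ncard ≠ 0)
    simpa using Indep.ncard_le_rk (hS.isNonloop (hU hu)).indep (singleton_subset_iff.2 hu)
  · obtain ⟨u, v, hu, hv, huv⟩ :=
      (one_lt_ncard_iff (finite_of_ncard_ne_zero (by omega))).1 (by omega : 1 < U.ncard)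
    have hind : N.Indep {u, v} :=
      ((hS.isNonloop (hU hv)).indep.insert_indep_iff_of_notMem (by simpa using huv)).2
        ⟨hS.1 (hU hu), fun h => huv (hS.2.2.2 u (hU hu) v (hU hv) h)⟩
    simpa [ncard_pair huv] using Indep.ncard_le_rk hind (pair_subset hu hv)

lemma not_siThreeConnected_of_isVertSep (h : IsVertSep N 2 X) : ¬ SiThreeConnected N := by
  intro hsi
  obtain ⟨hXE, hlam, hrX, hrY⟩ := h
  obtain ⟨S, hS⟩ := exists_simpRep N
  set U := S ∩ N.closure X
  have hXU : X ⊆ N.closure U := fun x hx => by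
    obtain hl | hn := N.isLoop_or_isNonloop x (hXE hx)
    · exact hl.mem_closure U
    · obtain ⟨s, hs, hsx, hxs⟩ := hS.exists_parallel hn
      have hsU : s ∈ U := ⟨hs, N.closure_subset_closure (singleton_subset_iff.2 hx) hsx⟩
      exact N.closure_subset_closure (singleton_subset_iff.2 hsU) hxs
  have hVY : S \ U ⊆ N.closure (N.E \ X) := fun v ⟨hvS, hvU⟩ =>
    N.subset_closure _ sdiff_subset ⟨hS.1 hvS, fun hvX => hvU ⟨hvS, N.subset_closure X hXE hvX⟩⟩
  have hrU : rk N U = rk N X :=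
    le_antisymm (rk_le_of_subset_closure inter_subset_right) (rk_le_of_subset_closure hXU)
  have hrV : rk N (S \ U) ≤ rk N (N.E \ X) := rk_le_of_subset_closure hVY
  have hsub := rk_union_le (M := N) U (S \ U)
  rw [union_sdiff_cancel inter_subset_left] at hsub
  have hSfin : S.Finite := N.ground_finite.subset hS.1
  have hU : 2 ≤ U.ncard := hrX.trans (hrU ▸ rk_le_ncard (hSfin.subset inter_subset_left))
  have hV := rk_le_ncard (M := N) (hSfin.subset (sdiff_subset : S \ U ⊆ S))
  have hlamU := lam_restrict (N := N) (U := U) inter_subset_left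
  rw [hS.rk_eq] at hsub hlamU
  unfold lam at hlam
  obtain hV2 | hV1 := le_or_gt 2 (S \ U).ncard
  · exact hsi S hS 2 (by norm_num) U ⟨⟨inter_subset_left, by omega⟩, hU, hV2⟩
  -- `r(S - U) ≤ 1` forces `λ_{N ↾ S}(U) ≤ 2 - r_N(E - X) ≤ 0`
  · exact hsi S hS 1 (by norm_num) U ⟨⟨inter_subset_left, by omega⟩, by omega, by
      simp only [restrict_ground_eq]; omega⟩

lemma exists_isVertSep_of_not_siThreeConnected (h : ¬ SiThreeConnected N) :
    ∃ k < 3, ∃ X, IsVertSep N k X := by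
  simp only [SiThreeConnected, ThreeConnected, not_forall, not_not] at h
  obtain ⟨S, hS, k, hk, U, ⟨hUS, hlam⟩, hkU, hkV⟩ := h
  rw [restrict_ground_eq] at hUS hkV
  refine ⟨k, hk, ⋃ u ∈ U, N.closure {u}, ?_⟩
  set X := ⋃ u ∈ U, N.closure {u}
  have hXE : X ⊆ N.E := iUnion₂_subset fun u _ => N.closure_subset_ground _
  have hUX : U ⊆ X := fun u hu => mem_biUnion hu (N.mem_closure_self u (hS.1 (hUS hu)))
  have hXU : X ⊆ N.closure U :=
    iUnion₂_subset fun u hu => N.closure_subset_closure (singleton_subset_iff.2 hu)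
  have hVY : S \ U ⊆ N.E \ X := fun v ⟨hvS, hvU⟩ => ⟨hS.1 hvS, fun hvX => by
    obtain ⟨u, hu, hvu⟩ := mem_iUnion₂.1 hvX
    exact hvU (hS.2.2.2 v hvS u (hUS hu) hvu ▸ hu)⟩
  have hYV : N.E \ X ⊆ N.closure (S \ U) := fun e ⟨he, heX⟩ => by
    obtain hl | hn := N.isLoop_or_isNonloop e he
    · exact hl.mem_closure _
    · obtain ⟨s, hs, -, hes⟩ := hS.exists_parallel hn
      have hsU : s ∉ U := fun hsU => heX (mem_biUnion hsU hes)
      exact N.closure_subset_closure (singleton_subset_iff.2 (mem_sdiff_of_mem hs hsU)) hes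
  have hrX : rk N X = rk N U := le_antisymm (rk_le_of_subset_closure hXU) (rk_mono hUX)
  have hrY : rk N (N.E \ X) = rk N (S \ U) :=
    le_antisymm (rk_le_of_subset_closure hYV) (rk_mono hVY)
  have hkU' := hS.le_rk_of_le_ncard hUS (by omega) hkU
  have hkV' := hS.le_rk_of_le_ncard sdiff_subset (by omega) hkV
  rw [lam_restrict hUS, hS.rk_eq] at hlam
  refine ⟨hXE, ?_, by omega, by omega⟩
  unfold lam
  omega

end Simplification

end NDP

/-- A 3-connected matroid `M` has a vertical 3-separation
`(X, {z}, Y)` iff `si(M/z)` is not 3-connected. -/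
theorem stmt18 (M : Matroid α) [M.Finite] (hM : NDP.ThreeConnected M)
    (z : α) (hz : z ∈ M.E) :
    (∃ X Y, NDP.VertThreeSep M X z Y) ↔
      ¬ NDP.SiThreeConnected (NDP.contract M {z}) := by
  rw [NDP.contract_eq]
  constructor
  · rintro ⟨X, _, h⟩
    exact NDP.not_siThreeConnected_of_isVertSep (h.isVertSep_contract hM)
  · intro h
    obtain ⟨k, hk, X, hX⟩ := NDP.exists_isVertSep_of_not_siThreeConnected h
    exact ⟨X, _, hX.vertThreeSep_of_contract hM hz hk⟩
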